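/- arXiv:2501.14676 — 3 statements merged into one kernel-verified Lean document; each statement's English description precedes it below -/
import Mathlib

section
/- For all positive integers n, √(2π)·n^(n+1/2)·e^(−n)·e^(1/(12n+1)) ≤ n! ≤ √(2π)·n^(n+1/2)·e^(−n)·e^(1/(12n)). -/
open Real Filter Topology

private lemma stirling_key_lb (m : ℕ) :
    1 / (12 * ((m : ℝ) + 1) + 1) - 1 / (12 * ((m : ℝ) + 1 + 1) + 1) ≤
      Real.log (Stirling.stirlingSeq (m + 1)) - Real.log (Stirling.stirlingSeq (m + 2)) := by
  have h := Stirling.log_stirlingSeq_diff_hasSum m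
  have h1 := le_hasSum h 0 (fun j _ => by positivity)
  have hterm : ((1 : ℝ) / (2 * ((0:ℕ) + 1 : ℕ) + 1) *
      ((1 / (2 * ((m : ℕ) + 1 : ℕ) + 1)) ^ 2) ^ ((0:ℕ) + 1 : ℕ)) =
      1 / 3 * (1 / (2 * ((m : ℝ) + 1) + 1)) ^ 2 := by
    push_cast; ring
  rw [hterm] at h1
  refine le_trans ?_ h1
  set x : ℝ := (m : ℝ) + 1 with hx
  have hx1 : (1 : ℝ) ≤ x := by simp [hx]
  have h1p : (0:ℝ) < 12 * x + 1 := by linarith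
  have h2p : (0:ℝ) < 12 * (x + 1) + 1 := by linarith
  have h3p : (0:ℝ) < 2 * x + 1 := by linarith
  rw [div_sub_div _ _ h1p.ne' h2p.ne', div_pow, one_pow, one_div_mul_one_div,
    div_le_div_iff₀ (by positivity) (by positivity)]
  nlinarith [sq_nonneg x]

private lemma stirling_key_ub (m : ℕ) :
    Real.log (Stirling.stirlingSeq (m + 1)) - Real.log (Stirling.stirlingSeq (m + 2)) ≤
      1 / (12 * ((m : ℝ) + 1)) - 1 / (12 * ((m : ℝ) + 1 + 1)) := by
  set x : ℝ := (m : ℝ) + 1 with hx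
  have hx1 : (1 : ℝ) ≤ x := by simp [hx]
  have hx0 : (0:ℝ) < x := by linarith
  set q : ℝ := (1 / (2 * x + 1)) ^ 2 with hq
  have hq0 : 0 ≤ q := sq_nonneg _
  have hq1 : q < 1 := by
    rw [hq, div_pow, one_pow, div_lt_one (by positivity)]
    nlinarith
  have hgeo : HasSum (fun k : ℕ => (1 : ℝ) / 3 * q ^ (k + 1)) (q / 3 * (1 - q)⁻¹) := by
    have h := (hasSum_geometric_of_lt_one hq0 hq1).mul_left (q / 3)
    have he : (fun k : ℕ => q / 3 * q ^ k) = fun k : ℕ => (1 : ℝ) / 3 * q ^ (k + 1) :=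
      funext fun k => by rw [pow_succ]; ring
    rwa [he] at h
  have h := Stirling.log_stirlingSeq_diff_hasSum m
  have hle : Real.log (Stirling.stirlingSeq (m + 1)) - Real.log (Stirling.stirlingSeq (m + 2)) ≤
      q / 3 * (1 - q)⁻¹ := by
    refine hasSum_le (fun k => ?_) h hgeo
    have hcast : ((1 : ℝ) / (2 * ((k:ℕ) + 1 : ℕ) + 1) *
        ((1 / (2 * ((m : ℕ) + 1 : ℕ) + 1)) ^ 2) ^ ((k:ℕ) + 1 : ℕ)) =
        1 / (2 * ((k:ℝ) + 1) + 1) * q ^ (k + 1) := by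
      rw [hq, hx]; push_cast; ring
    rw [hcast]
    refine mul_le_mul_of_nonneg_right ?_ (pow_nonneg hq0 _)
    rw [div_le_div_iff₀ (by positivity) (by norm_num)]
    have : (0:ℝ) ≤ (k:ℝ) := Nat.cast_nonneg k
    linarith
  refine hle.trans_eq ?_
  have h1q : (1:ℝ) - q = (4 * x ^ 2 + 4 * x) / ((2 * x + 1) ^ 2) := by
    rw [hq]; field_simp; ring
  have h4 : (0:ℝ) < 4 * x ^ 2 + 4 * x := by nlinarith
  rw [hq, h1q, div_pow, one_pow, inv_div]
  field_simp
  ring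

private lemma stirling_log_tendsto :
    Tendsto (fun k : ℕ => Real.log (Stirling.stirlingSeq (k + 1))) atTop (𝓝 (Real.log (√π))) := by
  have h1 : Tendsto (fun k : ℕ => Real.log (Stirling.stirlingSeq k)) atTop
      (𝓝 (Real.log (√π))) :=
    ((Real.continuousAt_log (by positivity)).tendsto).comp Stirling.tendsto_stirlingSeq_sqrt_pi
  exact h1.comp (tendsto_add_atTop_nat 1)

theorem stirling_two_sided (n : ℕ) (hn : 1 ≤ n) :
    Real.sqrt (2 * Real.pi) * (n : ℝ) ^ ((n : ℝ) + 1 / 2) * Real.exp (-(n : ℝ)) *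
        Real.exp (1 / (12 * (n : ℝ) + 1)) ≤ (n.factorial : ℝ) ∧
    (n.factorial : ℝ) ≤ Real.sqrt (2 * Real.pi) * (n : ℝ) ^ ((n : ℝ) + 1 / 2) *
        Real.exp (-(n : ℝ)) * Real.exp (1 / (12 * (n : ℝ))) := by
  obtain ⟨m, rfl⟩ : ∃ m, n = m + 1 := ⟨n - 1, by omega⟩
  set u : ℕ → ℝ := fun k => Real.log (Stirling.stirlingSeq (k + 1)) - 1 / (12 * ((k : ℝ) + 1))
    with hu_def
  set v : ℕ → ℝ := fun k => Real.log (Stirling.stirlingSeq (k + 1)) - 1 / (12 * ((k : ℝ) + 1) + 1)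
    with hv_def
  have hu : Monotone u := by
    apply monotone_nat_of_le_succ
    intro k
    have := stirling_key_ub k
    simp only [hu_def]
    push_cast
    linarith
  have hv : Antitone v := by
    apply antitone_nat_of_succ_le
    intro k
    have := stirling_key_lb k
    simp only [hv_def]
    push_cast
    linarith
  have hat : Tendsto (fun k : ℕ => 12 * ((k : ℝ) + 1)) atTop atTop :=
    Tendsto.const_mul_atTop (by norm_num)
      (tendsto_atTop_add_const_right atTop 1 tendsto_natCast_atTop_atTop)
  have hzero : Tendsto (fun k : ℕ => 1 / (12 * ((k : ℝ) + 1))) atTop (𝓝 0) := by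
    simp only [one_div]
    exact hat.inv_tendsto_atTop
  have hzero' : Tendsto (fun k : ℕ => 1 / (12 * ((k : ℝ) + 1) + 1)) atTop (𝓝 0) := by
    simp only [one_div]
    exact (tendsto_atTop_add_const_right atTop 1 hat).inv_tendsto_atTop
  have htu : Tendsto u atTop (𝓝 (Real.log (√π))) := by
    have h := stirling_log_tendsto.sub hzero
    rw [sub_zero] at h
    exact h
  have htv : Tendsto v atTop (𝓝 (Real.log (√π))) := by
    have h := stirling_log_tendsto.sub hzero'
    rw [sub_zero] at h
    exact h
  have hL1 : Real.log (√π) ≤ v m := hv.le_of_tendsto htv m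
  have hL2 : u m ≤ Real.log (√π) := hu.ge_of_tendsto htu m
  set x : ℝ := (m : ℝ) + 1 with hx
  have hx1 : (1 : ℝ) ≤ x := by simp [hx]
  have hx0 : (0 : ℝ) < x := by linarith
  have hLpi : Real.log (√π) = Real.log π / 2 := Real.log_sqrt pi_pos.le
  have hfact : Real.log ((m + 1).factorial : ℝ) =
      Real.log (Stirling.stirlingSeq (m + 1)) + 1 / 2 * Real.log 2 + (x + 1 / 2) * Real.log x
        - x := by
    have h := Stirling.log_stirlingSeq_formula (m + 1)
    have hc : ((m + 1 : ℕ) : ℝ) = x := by push_cast [hx]; ring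
    rw [hc] at h
    rw [Real.log_mul two_ne_zero hx0.ne', Real.log_div hx0.ne' (Real.exp_pos 1).ne',
      Real.log_exp] at h
    linarith [h]
  have hfpos : (0 : ℝ) < ((m + 1).factorial : ℝ) := by positivity
  have hsq : Real.log (Real.sqrt (2 * π)) = 1 / 2 * Real.log 2 + 1 / 2 * Real.log π := by
    rw [Real.log_sqrt (by positivity), Real.log_mul two_ne_zero pi_pos.ne']
    ring
  have hcast : ((m + 1 : ℕ) : ℝ) = x := by push_cast [hx]; ring
  have hbase : Real.log (Real.sqrt (2 * π) * x ^ (x + 1 / 2) * Real.exp (-x)) =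
      1 / 2 * Real.log 2 + 1 / 2 * Real.log π + (x + 1 / 2) * Real.log x - x := by
    rw [Real.log_mul (by positivity) (Real.exp_pos _).ne',
      Real.log_mul (by positivity) (by positivity), Real.log_exp, Real.log_rpow hx0, hsq]
    ring
  have hum : u m = Real.log (Stirling.stirlingSeq (m + 1)) - 1 / (12 * x) := by
    simp only [hu_def, hx]
  have hvm : v m = Real.log (Stirling.stirlingSeq (m + 1)) - 1 / (12 * x + 1) := by
    simp only [hv_def, hx]
  rw [hum] at hL2
  rw [hvm] at hL1
  constructor
  · rw [hcast, ← Real.log_le_log_iff (by positivity) hfpos, Real.log_mul (by positivity)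
      (Real.exp_pos _).ne', Real.log_exp, hbase, hfact]
    linarith
  · rw [hcast, ← Real.log_le_log_iff hfpos (by positivity), Real.log_mul (by positivity)
      (Real.exp_pos _).ne', Real.log_exp, hbase, hfact]
    linarith
end

section
/- For every complex number z = x + iy and every positive integer n, |H_n(z)| ≤ 2^{n/2}·(n!)^{1/2}·e^{√(2n)·|z|}. -/
/-!
Mathlib's `hermite n` is the probabilists' Hermite polynomial `He_n`, and
`H_n(z) = 2^{n/2} He_n(√2 z)`. The coefficient of `w^k` in `He_n` is `±(n-k-1)‼ · C(n,k)` or `0`;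
since `(n-k-1)‼² ≤ (n-k)!` and `n!/(n-k)! ≤ n^k`, its absolute value is at most
`√(n!) · √n^k / k!`. Summing the terms gives `|He_n(w)| ≤ √(n!) · e^{√n |w|}`, which at `w = √2 z`
is the bound.
-/

open Complex Real

/-- Physicists' Hermite polynomial, as an entire function:
`H n z = (-1)^n e^{z^2} (d/dz)^n e^{-z^2}`. -/
noncomputable def hermiteH (n : ℕ) (z : ℂ) : ℂ :=
  (-1) ^ n * Complex.exp (z ^ 2) * iteratedDeriv n (fun w => Complex.exp (-w ^ 2)) z

/-- Normalized Hermite function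
`ζ_n(z) = (π^{1/4} 2^{n/2} (n!)^{1/2})⁻¹ (-1)^n e^{-z²/2} H_n(z)`. -/
noncomputable def zetaH (n : ℕ) (z : ℂ) : ℂ :=
  (((Real.pi ^ ((1 : ℝ) / 4) * 2 ^ ((n : ℝ) / 2) * Real.sqrt (n.factorial))⁻¹ : ℝ) : ℂ) *
    (-1) ^ n * Complex.exp (-z ^ 2 / 2) * hermiteH n z

open Polynomial Nat

namespace Nat

theorem doubleFactorial_sub_one_le : ∀ n : ℕ, (n - 1)‼ ≤ n‼
  | 0 | 1 => le_rfl
  | n + 2 => by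
    rw [doubleFactorial_add_two, show n + 2 - 1 = n + 1 by omega, doubleFactorial_add_one]
    exact Nat.mul_le_mul (by omega) (doubleFactorial_sub_one_le n)

theorem sq_doubleFactorial_sub_one_le_factorial : ∀ n : ℕ, (n - 1)‼ ^ 2 ≤ n !
  | 0 => le_rfl
  | n + 1 => by
    rw [factorial_eq_mul_doubleFactorial, Nat.add_sub_cancel, sq]
    exact Nat.mul_le_mul_right _ (doubleFactorial_sub_one_le (n + 1))

theorem sq_doubleFactorial_mul_descFactorial_le (n k : ℕ) :
    ((n - k - 1)‼ * n.descFactorial k) ^ 2 ≤ n ! * n ^ k := by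
  rcases le_or_gt k n with hk | hk
  · calc ((n - k - 1)‼ * n.descFactorial k) ^ 2
        = (n - k - 1)‼ ^ 2 * n.descFactorial k * n.descFactorial k := by ring
      _ ≤ (n - k)! * n.descFactorial k * n ^ k := by
        gcongr
        · exact sq_doubleFactorial_sub_one_le_factorial (n - k)
        · exact descFactorial_le_pow n k
      _ = n ! * n ^ k := by rw [factorial_mul_descFactorial hk]
  · simp [descFactorial_eq_zero_iff_lt.2 hk]

end Nat

namespace Polynomial

theorem abs_coeff_hermite_le (n k : ℕ) :
    |(hermite n).coeff k| ≤ (n - k - 1)‼ * n.choose k := by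
  rcases Nat.even_or_odd (n + k) with h | h
  · rw [coeff_hermite_of_even_add h, abs_mul, abs_mul, abs_pow, abs_neg, abs_one, one_pow,
      one_mul, Nat.abs_cast, Nat.abs_cast]
  · rw [coeff_hermite_of_odd_add h, abs_zero]
    positivity

theorem abs_coeff_hermite_mul_factorial_le (n k : ℕ) :
    |((hermite n).coeff k : ℝ)| * k ! ≤ √(n ! : ℝ) * √(n : ℝ) ^ k := by
  have hsq : (√(n ! : ℝ) * √(n : ℝ) ^ k) ^ 2 = n ! * n ^ k := by
    rw [mul_pow, ← pow_mul, mul_comm k, pow_mul, sq_sqrt (by positivity), sq_sqrt (by positivity)]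
  calc |((hermite n).coeff k : ℝ)| * k ! ≤ (((n - k - 1)‼ * n.choose k : ℕ) : ℝ) * k ! := by
        gcongr
        exact_mod_cast abs_coeff_hermite_le n k
    _ = (((n - k - 1)‼ * n.descFactorial k : ℕ) : ℝ) := by
        rw [descFactorial_eq_factorial_mul_choose]
        push_cast
        ring
    _ ≤ √(n ! : ℝ) * √(n : ℝ) ^ k := by
        refine le_of_pow_le_pow_left₀ two_ne_zero (by positivity) ?_
        rw [hsq]
        exact_mod_cast Nat.sq_doubleFactorial_mul_descFactorial_le n k

theorem norm_aeval_hermite_le (n : ℕ) (w : ℂ) :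
    ‖aeval w (hermite n)‖ ≤ √(n ! : ℝ) * Real.exp (√(n : ℝ) * ‖w‖) := by
  rw [aeval_eq_sum_range, natDegree_hermite]
  calc ‖∑ k ∈ Finset.range (n + 1), (hermite n).coeff k • w ^ k‖
      ≤ ∑ k ∈ Finset.range (n + 1), ‖(hermite n).coeff k • w ^ k‖ := norm_sum_le _ _
    _ ≤ ∑ k ∈ Finset.range (n + 1), √(n ! : ℝ) * ((√(n : ℝ) * ‖w‖) ^ k / k !) := by
        gcongr with k
        rw [norm_zsmul ℝ, norm_pow, Real.norm_eq_abs, mul_div_assoc', le_div_iff₀ (by positivity)]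
        calc |((hermite n).coeff k : ℝ)| * ‖w‖ ^ k * k !
            = |((hermite n).coeff k : ℝ)| * k ! * ‖w‖ ^ k := by ring
          _ ≤ √(n ! : ℝ) * √(n : ℝ) ^ k * ‖w‖ ^ k :=
            mul_le_mul_of_nonneg_right (abs_coeff_hermite_mul_factorial_le n k) (by positivity)
          _ = √(n ! : ℝ) * (√(n : ℝ) * ‖w‖) ^ k := by ring
    _ ≤ √(n ! : ℝ) * Real.exp (√(n : ℝ) * ‖w‖) := by
        rw [← Finset.mul_sum]
        gcongr
        exact Real.sum_le_exp_of_nonneg (by positivity) _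

theorem iteratedDeriv_cexp_neg_sq_div_two (n : ℕ) :
    iteratedDeriv n (fun w : ℂ => cexp (-(w ^ 2 / 2))) =
      fun w => (-1) ^ n * aeval w (hermite n) * cexp (-(w ^ 2 / 2)) := by
  induction n with
  | zero => funext w; simp
  | succ n ih =>
    funext w
    have hg : HasDerivAt (fun w : ℂ => cexp (-(w ^ 2 / 2))) (-w * cexp (-(w ^ 2 / 2))) w := by
      simpa [mul_comm] using ((hasDerivAt_pow 2 w).div_const 2).neg.cexp
    have hp := ((hermite n).hasDerivAt_aeval w).const_mul ((-1 : ℂ) ^ n) |>.mul hg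
    rw [iteratedDeriv_succ, ih]
    refine hp.deriv.trans ?_
    rw [hermite_succ, map_sub, map_mul, aeval_X, pow_succ]
    ring

end Polynomial

theorem hermiteH_eq_aeval_hermite (n : ℕ) (z : ℂ) :
    hermiteH n z = (√2 : ℂ) ^ n * aeval ((√2 : ℂ) * z) (hermite n) := by
  have hsq (w : ℂ) : ((√2 : ℂ) * w) ^ 2 / 2 = w ^ 2 := by
    rw [mul_pow, ← ofReal_pow, sq_sqrt zero_le_two]
    push_cast
    ring
  have hg : (fun w : ℂ => cexp (-w ^ 2)) = fun w => cexp (-(((√2 : ℂ) * w) ^ 2 / 2)) := by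
    simp only [hsq]
  have hsign : ((-1 : ℂ) ^ n) ^ 2 = 1 := by
    rw [← pow_mul, mul_comm, pow_mul, neg_one_sq, one_pow]
  have hexp : cexp (z ^ 2) * cexp (-z ^ 2) = 1 := by
    rw [← Complex.exp_add, add_neg_cancel, Complex.exp_zero]
  rw [hermiteH, hg, iteratedDeriv_comp_const_mul (f := fun w => cexp (-(w ^ 2 / 2))) (by fun_prop),
    iteratedDeriv_cexp_neg_sq_div_two]
  simp only [hsq]
  linear_combination ((√2 : ℂ) ^ n * aeval ((√2 : ℂ) * z) (hermite n)) *
    (cexp (z ^ 2) * cexp (-z ^ 2) * hsign + hexp)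

theorem hermiteH_eijndhoven_meyers_bound_general (z : ℂ) (n : ℕ) :
    ‖hermiteH n z‖ ≤ 2 ^ ((n : ℝ) / 2) * Real.sqrt (n.factorial) *
      Real.exp (Real.sqrt (2 * (n : ℝ)) * ‖z‖) := by
  have hsqrt2 : ‖(√2 : ℂ)‖ = √2 := by simp
  calc ‖hermiteH n z‖ = √2 ^ n * ‖aeval ((√2 : ℂ) * z) (hermite n)‖ := by
        rw [hermiteH_eq_aeval_hermite, norm_mul, norm_pow, hsqrt2]
    _ ≤ √2 ^ n * (√(n ! : ℝ) * Real.exp (√(n : ℝ) * ‖(√2 : ℂ) * z‖)) := by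
        gcongr
        exact norm_aeval_hermite_le n _
    _ = _ := by
        rw [norm_mul, hsqrt2, rpow_div_two_eq_sqrt _ zero_le_two, rpow_natCast,
          sqrt_mul zero_le_two]
        ring_nf

theorem hermiteH_eijndhoven_meyers_bound (z : ℂ) (n : ℕ) (hn : 1 ≤ n) :
    ‖hermiteH n z‖ ≤ 2 ^ ((n : ℝ) / 2) * Real.sqrt (n.factorial) *
      Real.exp (Real.sqrt (2 * (n : ℝ)) * ‖z‖) :=
  hermiteH_eijndhoven_meyers_bound_general z n
end

section
/- For every complex number z = x + iy and every positive integer n, the normalized Hermite function satisfies |ζ_n(z)| ≤ (2e³/π²)^{1/4} · e^{|z|²/2 + x² + |y|} · e^{2n|y|}. -/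
/-!
Write `H_n` for the physicists' Hermite polynomial, so that `hermiteH n = H_n` and
`‖ζ_n(z)‖ = e^{(y² - x²)/2} ‖H_n(z)‖ / (π^{1/4} √(2ⁿ n!))`.

On the real line, `w = e^{-x²/2} H_m` solves `w'' = (x² - (2m+1)) w`, so the energy
`w'² + (2m+1-x²) w²` is largest at `x = 0`, where it is at most `(4m+1) 2^m m!`; this bounds
`H_m(x)²` by `2^{m+1} m! e^{4x²}` for `x² ≤ m`. For `x² ≥ m` the three-term recurrence gives
`|H_m(x)| ≤ (3|x|)^m`, which is below the same bound.

Taylor expansion at `x = re z` is the addition formula `H_n(x + h) = ∑ C(n,i) (2h)^i H_{n-i}(x)`;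
with the real bound it gives `|H_n(z)| ≤ √(2^{n+1} n!) e^{2x²} (1 + 2|y|)^n`. The factor
`√(2ⁿ n!)` cancels against the normalisation, `(1 + 2|y|)^n ≤ e^{2n|y|}`, and
`√2 / π^{1/4} ≤ (2e³/π²)^{1/4}` because `2π ≤ e³`.
-/

open Complex Real

open Polynomial Set

noncomputable def physHermite (R : Type*) [CommRing R] : ℕ → R[X]
  | 0 => 1
  | n + 1 => 2 * X * physHermite R n - derivative (physHermite R n)

section Algebra

variable (R : Type*) [CommRing R]

@[simp] theorem physHermite_zero : physHermite R 0 = 1 := rfl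

theorem physHermite_succ (n : ℕ) :
    physHermite R (n + 1) = 2 * X * physHermite R n - derivative (physHermite R n) := rfl

theorem derivative_physHermite_succ (n : ℕ) :
    derivative (physHermite R (n + 1)) = 2 * (n + 1) * physHermite R n := by
  induction n with
  | zero => simp [physHermite_succ]
  | succ n ih =>
    rw [physHermite_succ R (n + 1), derivative_sub]
    simp only [derivative_mul, derivative_ofNat, derivative_X, ih, derivative_natCast,
      derivative_add, derivative_one]
    push_cast
    linear_combination (-2 * (n + 1) : R[X]) * physHermite_succ R n

theorem physHermite_succ_succ (n : ℕ) :
    physHermite R (n + 2) =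
      2 * X * physHermite R (n + 1) - 2 * ((n : R[X]) + 1) * physHermite R n := by
  rw [physHermite_succ R (n + 1), derivative_physHermite_succ]

theorem derivative_derivative_physHermite (n : ℕ) :
    derivative (derivative (physHermite R n)) =
      2 * X * derivative (physHermite R n) - 2 * (n : R[X]) * physHermite R n := by
  have h := congrArg derivative (physHermite_succ R n)
  rw [derivative_physHermite_succ, derivative_sub] at h
  simp only [derivative_mul, derivative_ofNat, derivative_X] at h
  linear_combination h

theorem iterate_derivative_physHermite (k n : ℕ) :
    derivative^[k] (physHermite R n) =
      2 ^ k * (n.descFactorial k : R[X]) * physHermite R (n - k) := by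
  induction k with
  | zero => simp
  | succ k ih =>
    rw [Function.iterate_succ_apply', ih, Nat.descFactorial_succ]
    rcases Nat.eq_zero_or_eq_succ_pred (n - k) with h | h
    · simp only [h, Nat.sub_succ, Nat.pred_zero]
      simp [derivative_pow, derivative_ofNat]
    · rw [h, derivative_mul, derivative_physHermite_succ, Nat.sub_succ, h]
      simp only [derivative_mul, derivative_pow, derivative_ofNat, derivative_natCast,
        Nat.pred_succ]
      push_cast
      ring

theorem natDegree_physHermite_le (n : ℕ) : (physHermite R n).natDegree ≤ n := by
  induction n with
  | zero => simp
  | succ n ih =>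
    rw [physHermite_succ]
    refine (natDegree_sub_le _ _).trans (max_le ?_ ?_)
    · refine natDegree_mul_le.trans ?_
      have : (2 * X : R[X]).natDegree ≤ 1 := natDegree_mul_le.trans (by simp [natDegree_X_le])
      omega
    · exact (natDegree_derivative_le _).trans (by omega)

variable {R} in
theorem map_physHermite {S : Type*} [CommRing S] (f : R →+* S) (n : ℕ) :
    (physHermite R n).map f = physHermite S n := by
  induction n with
  | zero => simp
  | succ n ih => simp [physHermite_succ, ← derivative_map, ih]

theorem hasseDeriv_physHermite [IsDomain R] [CharZero R] (k n : ℕ) :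
    hasseDeriv k (physHermite R n) = 2 ^ k * (n.choose k : R[X]) * physHermite R (n - k) := by
  apply smul_right_injective R[X] (Nat.factorial_ne_zero k)
  change (k.factorial • hasseDeriv k) (physHermite R n) = k.factorial • _
  rw [factorial_smul_hasseDeriv, iterate_derivative_physHermite,
    Nat.descFactorial_eq_factorial_mul_choose, nsmul_eq_mul]
  push_cast
  ring

theorem physHermite_eval_add [IsDomain R] [CharZero R] (n : ℕ) (x h : R) :
    (physHermite R n).eval (x + h) =
      ∑ i ∈ Finset.range (n + 1),
        (n.choose i : R) * (2 * h) ^ i * (physHermite R (n - i)).eval x := by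
  have hdeg : (taylor x (physHermite R n)).natDegree < n + 1 := by
    rw [natDegree_taylor]
    exact Nat.lt_succ_of_le (natDegree_physHermite_le R n)
  rw [add_comm, ← taylor_eval, eval_eq_sum_range' hdeg]
  refine Finset.sum_congr rfl fun i _ => ?_
  rw [taylor_coeff, hasseDeriv_physHermite]
  simp only [eval_mul, eval_pow, eval_ofNat, eval_natCast]
  ring

end Algebra

theorem oscillator_energy_le {w v : ℝ → ℝ} {c : ℝ} (hw : ∀ t, HasDerivAt w (v t) t)
    (hv : ∀ t, HasDerivAt v ((t ^ 2 - c) * w t) t) (x : ℝ) :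
    (c - x ^ 2) * w x ^ 2 ≤ v 0 ^ 2 + c * w 0 ^ 2 := by
  set E : ℝ → ℝ := fun t => v t ^ 2 + (c - t ^ 2) * w t ^ 2
  have hE : ∀ t, HasDerivAt E (-2 * t * w t ^ 2) t := fun t => by
    refine (((hv t).pow 2).add
      (((hasDerivAt_pow 2 t).const_sub c).mul ((hw t).pow 2))).congr_deriv ?_
    simp only [Pi.pow_apply]
    push_cast
    ring
  have hEc : Continuous E := continuous_iff_continuousAt.2 fun t => (hE t).continuousAt
  have hx : E x ≤ E 0 := by
    rcases le_total 0 x with h | h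
    · refine antitoneOn_of_hasDerivWithinAt_nonpos (convex_Ici 0) hEc.continuousOn
        (fun t _ => (hE t).hasDerivWithinAt) (fun t ht => ?_) self_mem_Ici h h
      rw [interior_Ici, mem_Ioi] at ht
      nlinarith [sq_nonneg (w t)]
    · refine monotoneOn_of_hasDerivWithinAt_nonneg (convex_Iic 0) hEc.continuousOn
        (fun t _ => (hE t).hasDerivWithinAt) (fun t ht => ?_) h self_mem_Iic h
      rw [interior_Iic, mem_Iio] at ht
      nlinarith [sq_nonneg (w t)]
  have h0 : E 0 = v 0 ^ 2 + c * w 0 ^ 2 := by simp [E]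
  nlinarith [sq_nonneg (v x)]

theorem sq_eval_zero_physHermite_le (m : ℕ) :
    (physHermite ℝ m).eval 0 ^ 2 ≤ 2 ^ m * m.factorial := by
  induction m using Nat.twoStepInduction with
  | zero => simp
  | one => simp [physHermite_succ]
  | more n ih _ =>
    rw [physHermite_succ_succ]
    simp only [eval_sub, eval_mul, eval_X, mul_zero, zero_mul, zero_sub, eval_ofNat, eval_add,
      eval_natCast, eval_one, Nat.factorial_succ, pow_succ]
    push_cast
    nlinarith [mul_le_mul_of_nonneg_left ih (sq_nonneg ((n : ℝ) + 1))]

theorem sq_eval_zero_derivative_physHermite_le (m : ℕ) :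
    (derivative (physHermite ℝ m)).eval 0 ^ 2 ≤ 2 * m * (2 ^ m * m.factorial) := by
  cases m with
  | zero => simp
  | succ k =>
    rw [derivative_physHermite_succ]
    simp only [eval_mul, eval_ofNat, eval_add, eval_natCast, eval_one, mul_pow, Nat.factorial_succ,
      pow_succ]
    push_cast
    nlinarith [mul_le_mul_of_nonneg_left (sq_eval_zero_physHermite_le k)
      (sq_nonneg ((k : ℝ) + 1))]

theorem physHermite_energy_le (m : ℕ) (x : ℝ) :
    (2 * m + 1 - x ^ 2) * (Real.exp (-x ^ 2 / 2) * (physHermite ℝ m).eval x) ^ 2 ≤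
      (derivative (physHermite ℝ m)).eval 0 ^ 2 +
        (2 * m + 1) * (physHermite ℝ m).eval 0 ^ 2 := by
  set p := physHermite ℝ m
  have hg (t : ℝ) :
      HasDerivAt (fun u => Real.exp (-u ^ 2 / 2)) (-t * Real.exp (-t ^ 2 / 2)) t := by
    have h : HasDerivAt (fun u : ℝ => -u ^ 2 / 2) (-t) t :=
      ((hasDerivAt_pow 2 t).neg.div_const 2).congr_deriv (by push_cast; ring)
    exact h.exp.congr_deriv (by ring)
  have hw : ∀ t, HasDerivAt (fun u => Real.exp (-u ^ 2 / 2) * p.eval u)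
      (Real.exp (-t ^ 2 / 2) * ((derivative p).eval t - t * p.eval t)) t := fun t =>
    ((hg t).mul (p.hasDerivAt t)).congr_deriv (by ring)
  have hv : ∀ t,
      HasDerivAt (fun u => Real.exp (-u ^ 2 / 2) * ((derivative p).eval u - u * p.eval u))
      ((t ^ 2 - (2 * m + 1)) * (Real.exp (-t ^ 2 / 2) * p.eval t)) t := fun t => by
    refine ((hg t).mul (((derivative p).hasDerivAt t).sub
      ((hasDerivAt_id t).mul (p.hasDerivAt t)))).congr_deriv ?_
    rw [show derivative (derivative p) = _ from derivative_derivative_physHermite ℝ m]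
    simp only [eval_sub, eval_mul, eval_ofNat, eval_X, eval_natCast, Pi.sub_apply, Pi.mul_apply,
      id]
    ring
  simpa using oscillator_energy_le hw hv x

theorem sq_eval_physHermite_le_of_sq_le {m : ℕ} {x : ℝ} (hx : x ^ 2 ≤ m) :
    (physHermite ℝ m).eval x ^ 2 ≤ 2 ^ (m + 1) * m.factorial * Real.exp (4 * x ^ 2) := by
  set F : ℝ := 2 ^ m * m.factorial
  have hF : 0 ≤ F := by positivity
  have hpos : 0 < 2 * (m : ℝ) + 1 - x ^ 2 := by linarith
  have henergy : (2 * m + 1 - x ^ 2) * (Real.exp (-x ^ 2 / 2) * (physHermite ℝ m).eval x) ^ 2 ≤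
      (4 * m + 1) * F := by
    have := physHermite_energy_le m x
    nlinarith [sq_eval_zero_physHermite_le m, sq_eval_zero_derivative_physHermite_le m]
  -- `4m + 1 ≤ 2 (2m + 1 - x²)(1 + 3x²)` for `x² ≤ m`, and `1 + 3x² ≤ exp (3x²)`
  have hcoef : 4 * (m : ℝ) + 1 ≤ (2 * m + 1 - x ^ 2) * (2 * Real.exp (3 * x ^ 2)) := by
    nlinarith [Real.add_one_le_exp (3 * x ^ 2), sq_nonneg x]
  have hw :
      (Real.exp (-x ^ 2 / 2) * (physHermite ℝ m).eval x) ^ 2 ≤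
        2 * Real.exp (3 * x ^ 2) * F := by
    refine le_of_mul_le_mul_left (henergy.trans ?_) hpos
    nlinarith [mul_le_mul_of_nonneg_right hcoef hF]
  calc (physHermite ℝ m).eval x ^ 2
      = Real.exp (x ^ 2) * (Real.exp (-x ^ 2 / 2) * (physHermite ℝ m).eval x) ^ 2 := by
        rw [mul_pow, ← Real.exp_nat_mul, ← mul_assoc, ← Real.exp_add,
          show x ^ 2 + ((2 : ℕ) : ℝ) * (-x ^ 2 / 2) = 0 by push_cast; ring, Real.exp_zero,
          one_mul]
    _ ≤ Real.exp (x ^ 2) * (2 * Real.exp (3 * x ^ 2) * F) := by gcongr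
    _ = 2 ^ (m + 1) * m.factorial * Real.exp (4 * x ^ 2) := by
        rw [pow_succ (2 : ℝ) m, show 4 * x ^ 2 = x ^ 2 + 3 * x ^ 2 by ring, Real.exp_add]
        ring

theorem abs_eval_physHermite_le_pow {x v : ℝ} (hv : 0 ≤ v) {n : ℕ}
    (h : 2 * |x| * v + 2 * n ≤ v ^ 2) : |(physHermite ℝ n).eval x| ≤ v ^ n := by
  induction n using Nat.twoStepInduction with
  | zero => simp
  | one =>
    simp only [physHermite_succ, physHermite_zero, derivative_one, mul_one, sub_zero, eval_mul,
      eval_ofNat, eval_X, abs_mul, abs_two, pow_one]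
    push_cast at h
    nlinarith [abs_nonneg x]
  | more n ih₀ ih₁ =>
    push_cast at h ih₀ ih₁
    have h₀ := ih₀ (by linarith)
    have h₁ := ih₁ (by linarith)
    rw [physHermite_succ_succ]
    simp only [eval_sub, eval_mul, eval_ofNat, eval_X, eval_add, eval_natCast, eval_one]
    calc |2 * x * (physHermite ℝ (n + 1)).eval x - 2 * (n + 1) * (physHermite ℝ n).eval x|
        ≤ 2 * |x| * v ^ (n + 1) + 2 * (n + 1) * v ^ n := by
          refine (abs_sub _ _).trans (add_le_add ?_ ?_) <;>
            rw [abs_mul, abs_mul, abs_two] <;> [skip; rw [abs_of_nonneg (by positivity)]] <;>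
            gcongr
      _ = v ^ n * (2 * |x| * v + 2 * (n + 1)) := by ring
      _ ≤ v ^ n * v ^ 2 := by gcongr; linarith
      _ = v ^ (n + 2) := by ring

theorem sq_eval_physHermite_le_of_le_sq {m : ℕ} {x : ℝ} (hx : m ≤ x ^ 2) :
    (physHermite ℝ m).eval x ^ 2 ≤ 2 ^ (m + 1) * m.factorial * Real.exp (4 * x ^ 2) := by
  have hH : |(physHermite ℝ m).eval x| ≤ (3 * |x|) ^ m :=
    abs_eval_physHermite_le_pow (by positivity) (by nlinarith [sq_abs x])
  have hpow : (x ^ 2) ^ m ≤ m.factorial * Real.exp (x ^ 2) := by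
    have := Real.pow_div_factorial_le_exp (x ^ 2) (sq_nonneg x) m
    rwa [div_le_iff₀ (by positivity), mul_comm] at this
  have he3 : (9 : ℝ) ≤ 2 * Real.exp 3 := by
    nlinarith [Real.quadratic_le_exp_of_nonneg (show (0 : ℝ) ≤ 3 by norm_num)]
  calc (physHermite ℝ m).eval x ^ 2 = |(physHermite ℝ m).eval x| ^ 2 := (sq_abs _).symm
    _ ≤ ((3 * |x|) ^ m) ^ 2 := by gcongr
    _ = 9 ^ m * (x ^ 2) ^ m := by
        rw [← pow_mul, mul_comm m 2, pow_mul, mul_pow, sq_abs, mul_pow]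
        norm_num
    _ ≤ (2 * Real.exp 3) ^ m * (m.factorial * Real.exp (x ^ 2)) := by gcongr
    _ = 2 ^ m * m.factorial * (Real.exp (3 * m) * Real.exp (x ^ 2)) := by
        rw [mul_pow, ← Real.exp_nat_mul]; ring_nf
    _ ≤ 2 ^ m * m.factorial * (Real.exp (3 * x ^ 2) * Real.exp (x ^ 2)) := by gcongr
    _ ≤ 2 ^ (m + 1) * m.factorial * Real.exp (4 * x ^ 2) := by
        rw [← Real.exp_add, pow_succ (2 : ℝ) m, show 3 * x ^ 2 + x ^ 2 = 4 * x ^ 2 by ring]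
        have : 0 ≤ 2 ^ m * (m.factorial : ℝ) * Real.exp (4 * x ^ 2) := by positivity
        linarith

theorem sq_eval_physHermite_le (m : ℕ) (x : ℝ) :
    (physHermite ℝ m).eval x ^ 2 ≤ 2 ^ (m + 1) * m.factorial * Real.exp (4 * x ^ 2) :=
  (le_total (x ^ 2) m).elim sq_eval_physHermite_le_of_sq_le sq_eval_physHermite_le_of_le_sq

theorem abs_eval_physHermite_le {k n : ℕ} (hk : k ≤ n) (x : ℝ) :
    |(physHermite ℝ k).eval x| ≤ √2 * √(2 ^ n * n.factorial) * Real.exp (2 * x ^ 2) := by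
  refine abs_le_of_sq_le_sq ((sq_eval_physHermite_le k x).trans ?_) (by positivity)
  rw [mul_pow, mul_pow, Real.sq_sqrt zero_le_two, Real.sq_sqrt (by positivity),
    ← Real.exp_nat_mul, pow_succ,
    show ((2 : ℕ) : ℝ) * (2 * x ^ 2) = 4 * x ^ 2 by push_cast; ring]
  have : (2 : ℝ) ^ k * k.factorial ≤ 2 ^ n * n.factorial := by
    gcongr
    norm_num
  nlinarith [Real.exp_pos (4 * x ^ 2)]

theorem physHermite_eval_ofReal (n : ℕ) (x : ℝ) :
    (physHermite ℂ n).eval (x : ℂ) = (((physHermite ℝ n).eval x : ℝ) : ℂ) := by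
  rw [← map_physHermite Complex.ofRealHom, eval_map]
  exact eval₂_hom Complex.ofRealHom x

theorem norm_eval_physHermite_le (n : ℕ) (z : ℂ) :
    ‖(physHermite ℂ n).eval z‖ ≤
      √2 * √(2 ^ n * n.factorial) * Real.exp (2 * z.re ^ 2) * (1 + 2 * |z.im|) ^ n := by
  set M := √2 * √(2 ^ n * n.factorial) * Real.exp (2 * z.re ^ 2)
  conv_lhs => rw [← Complex.re_add_im z, physHermite_eval_add]
  calc ‖∑ i ∈ Finset.range (n + 1), (n.choose i : ℂ) * (2 * (z.im * Complex.I)) ^ i *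
          (physHermite ℂ (n - i)).eval (z.re : ℂ)‖
      ≤ ∑ i ∈ Finset.range (n + 1), M * ((2 * |z.im|) ^ i * 1 ^ (n - i) * n.choose i) := by
        refine norm_sum_le_of_le _ fun i hi => ?_
        rw [physHermite_eval_ofReal, norm_mul, norm_mul, norm_pow, norm_mul, norm_mul,
          Complex.norm_natCast, Complex.norm_real, Complex.norm_I, Complex.norm_ofNat,
          Complex.norm_real, Real.norm_eq_abs, Real.norm_eq_abs, one_pow, mul_one, mul_one]
        have := abs_eval_physHermite_le (Nat.sub_le n i) z.re
        calc _ ≤ (n.choose i : ℝ) * (2 * |z.im|) ^ i * M := by gcongr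
          _ = _ := by ring
    _ = M * (1 + 2 * |z.im|) ^ n := by rw [← Finset.mul_sum, add_comm 1, add_pow]

theorem iteratedDeriv_cexp_neg_sq (n : ℕ) :
    iteratedDeriv n (fun w : ℂ => Complex.exp (-w ^ 2)) =
      fun z => (-1) ^ n * (physHermite ℂ n).eval z * Complex.exp (-z ^ 2) := by
  induction n with
  | zero => simp
  | succ n ih =>
    ext z
    rw [iteratedDeriv_succ, ih]
    have hsq : HasDerivAt (fun w : ℂ => -w ^ 2) (-2 * z) z :=
      (hasDerivAt_pow 2 z).neg.congr_deriv (by push_cast; ring)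
    have hexp :
        HasDerivAt (fun w : ℂ => Complex.exp (-w ^ 2)) (-2 * z * Complex.exp (-z ^ 2)) z :=
      hsq.cexp.congr_deriv (by ring)
    refine ((((physHermite ℂ n).hasDerivAt z).const_mul ((-1) ^ n)).mul hexp).deriv.trans ?_
    rw [physHermite_succ]
    simp only [eval_sub, eval_mul, eval_ofNat, eval_X]
    ring

theorem hermiteH_eq_eval (n : ℕ) (z : ℂ) : hermiteH n z = (physHermite ℂ n).eval z := by
  rw [hermiteH, iteratedDeriv_cexp_neg_sq]
  calc (-1) ^ n * Complex.exp (z ^ 2) *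
        ((-1) ^ n * (physHermite ℂ n).eval z * Complex.exp (-z ^ 2))
      = ((-1) ^ n * (-1) ^ n) * Complex.exp (z ^ 2 + -z ^ 2) * (physHermite ℂ n).eval z := by
        rw [Complex.exp_add]; ring
    _ = (physHermite ℂ n).eval z := by rw [← mul_pow]; simp

theorem norm_zetaH (n : ℕ) (z : ℂ) :
    ‖zetaH n z‖ = ‖(physHermite ℂ n).eval z‖ * Real.exp ((z.im ^ 2 - z.re ^ 2) / 2) /
      (π ^ (1 / 4 : ℝ) * √(2 ^ n * n.factorial)) := by
  have hsqrt : (2 : ℝ) ^ ((n : ℝ) / 2) * √(n.factorial) = √(2 ^ n * n.factorial) := by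
    rw [Real.sqrt_mul (by positivity), Real.sqrt_eq_rpow (2 ^ n), ← Real.rpow_natCast 2 n,
      ← Real.rpow_mul zero_le_two, div_eq_mul_one_div]
  have hre : (-z ^ 2 / 2).re = (z.im ^ 2 - z.re ^ 2) / 2 := by
    simp [sq]
  have hA : 0 < π ^ (1 / 4 : ℝ) * √(2 ^ n * n.factorial) := by positivity
  rw [← hsqrt, ← mul_assoc] at hA ⊢
  rw [zetaH, hermiteH_eq_eval, norm_mul, norm_mul, norm_mul, Complex.norm_real, Real.norm_eq_abs,
    abs_of_pos (inv_pos.2 hA), norm_pow, norm_neg, norm_one, one_pow, mul_one, Complex.norm_exp,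
    hre]
  field_simp

theorem sqrt_two_div_pi_rpow_le :
    √2 / π ^ (1 / 4 : ℝ) ≤ (2 * Real.exp 3 / π ^ 2) ^ (1 / 4 : ℝ) := by
  have h4 : √2 = (4 : ℝ) ^ (1 / 4 : ℝ) := by
    rw [Real.sqrt_eq_rpow, show (4 : ℝ) = 2 ^ (2 : ℝ) by norm_num,
      ← Real.rpow_mul zero_le_two]
    norm_num
  rw [h4, ← Real.div_rpow (by norm_num) pi_pos.le]
  refine Real.rpow_le_rpow (by positivity) ?_ (by norm_num)
  rw [div_le_div_iff₀ pi_pos (by positivity)]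
  nlinarith [Real.quadratic_le_exp_of_nonneg (show (0 : ℝ) ≤ 3 by norm_num), pi_le_four, pi_pos]

theorem one_add_pow_le_exp_mul {t : ℝ} (ht : 0 ≤ t) (n : ℕ) :
    (1 + t) ^ n ≤ Real.exp (n * t) := by
  rw [Real.exp_nat_mul, add_comm]
  gcongr
  exact Real.add_one_le_exp t

theorem zetaH_bound_general (z : ℂ) (n : ℕ) :
    ‖zetaH n z‖ ≤ (2 * Real.exp 3 / Real.pi ^ 2) ^ ((1 : ℝ) / 4) *
      Real.exp (‖z‖ ^ 2 / 2 + z.re ^ 2 + |z.im|) * Real.exp (2 * (n : ℝ) * |z.im|) := by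
  have hK : 0 < √(2 ^ n * n.factorial) := by positivity
  have hexp : Real.exp (2 * z.re ^ 2) * Real.exp ((z.im ^ 2 - z.re ^ 2) / 2) =
      Real.exp (‖z‖ ^ 2 / 2 + z.re ^ 2) := by
    rw [← Real.exp_add, Complex.sq_norm, Complex.normSq_apply]
    ring_nf
  rw [norm_zetaH]
  calc _ ≤ √2 * √(2 ^ n * n.factorial) * Real.exp (2 * z.re ^ 2) * (1 + 2 * |z.im|) ^ n *
          Real.exp ((z.im ^ 2 - z.re ^ 2) / 2) /
            (π ^ (1 / 4 : ℝ) * √(2 ^ n * n.factorial)) := by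
        gcongr
        exact norm_eval_physHermite_le n z
    _ = √2 / π ^ (1 / 4 : ℝ) * Real.exp (‖z‖ ^ 2 / 2 + z.re ^ 2) *
          (1 + 2 * |z.im|) ^ n := by
        rw [← hexp]
        field_simp
    _ ≤ _ := by
        gcongr ?_ * Real.exp ?_ * ?_
        · exact sqrt_two_div_pi_rpow_le
        · linarith [abs_nonneg z.im]
        · exact (one_add_pow_le_exp_mul (by positivity) n).trans_eq (by ring_nf)

theorem zetaH_bound (z : ℂ) (n : ℕ) (hn : 1 ≤ n) :
    ‖zetaH n z‖ ≤ (2 * Real.exp 3 / Real.pi ^ 2) ^ ((1 : ℝ) / 4) *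
      Real.exp (‖z‖ ^ 2 / 2 + z.re ^ 2 + |z.im|) * Real.exp (2 * (n : ℝ) * |z.im|) :=
  zetaH_bound_general z n
end
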